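/- arXiv:2010.02541 — 2 statements merged into one kernel-verified Lean document; each statement's English description precedes it below -/
import Mathlib

section
/- Let $k\le n/10$ and let $\mathcal{K}$ be an $n$-uniform family. Suppose there is an $(n-k)$-element set $K$ such that every $F\in\mathcal{K}$ satisfies $|F\cap K|\ge n-2k$. Then either $c_{n-k}(\mathcal{K})\le 1$ or $|\bigcap_{F\in\mathcal{K}}F|\ge n-2k$. -/
/-!
Splitting the minimal covers of `𝓤` according to whether they contain a point `x` gives
`c_λ(𝓤) ≤ c_λ(𝓤 - x) + λ⁻¹ c_λ({U ∈ 𝓤 : x ∉ U})`, because `C ↦ C \ {x}` sends the minimal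
covers through `x` injectively to minimal covers of the sets avoiding `x`. If `x` lies in the
common core the second family is empty and costs exactly `λ⁻¹`. Otherwise take `x` in a fixed
member `U₀`: when `|U \ U'| ≤ r` throughout, the sets avoiding `x` have size at most
`r + |U₀| - 1`, and a family of sets of size at most `m` has `c_λ ≤ m / λ` as long as
`2r + m ≤ 2λ + 1`. Induction on the total size of the family then bounds `λ² c_λ(𝓤)` by
`λ s + u (2r + u - 1) / 2`, where `s` is the size of the core and `u = |U₀| - s`.
For `𝒦` one has `|F \ F'| ≤ |F \ K| + |K \ F'| ≤ 3k`, and with `λ = n - k` and a core of size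
`s < n - 2k` this bound is at most `λ²`.
-/

open Finset

variable {α : Type*}

/-- `C` is a cover of the family `𝓕`: it intersects every member. -/
def IsCover [DecidableEq α] (C : Finset α) (𝓕 : Finset (Finset α)) : Prop :=
  ∀ A ∈ 𝓕, (C ∩ A).Nonempty

/-- The family of all minimal covers of `𝓕` of size at most `n`. -/
noncomputable def minCovers [Fintype α] [DecidableEq α] (n : ℕ)
    (𝓕 : Finset (Finset α)) : Finset (Finset α) := by
  classical
  exact univ.filter (fun C => C.card ≤ n ∧ IsCover C 𝓕 ∧
    ∀ C' ⊆ C, IsCover C' 𝓕 → C' = C)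

/-- `c_λ(𝓕) = ∑_{C ∈ 𝓒(𝓕)} λ^{-|C|}`. -/
noncomputable def covWeight [Fintype α] [DecidableEq α] (n : ℕ) (lam : ℝ)
    (𝓕 : Finset (Finset α)) : ℝ :=
  ∑ C ∈ minCovers n 𝓕, lam ^ (-(C.card : ℤ))

/-- The covering number `τ(𝓕)`: minimum size of a cover. -/
noncomputable def covNum [DecidableEq α] (𝓕 : Finset (Finset α)) : ℕ :=
  sInf {k | ∃ C : Finset α, C.card = k ∧ IsCover C 𝓕}


section Covers

variable [DecidableEq α]

lemma isCover_image_erase_iff {C : Finset α} {𝓤 : Finset (Finset α)} {x : α} :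
    IsCover C (𝓤.image (·.erase x)) ↔ IsCover (C.erase x) 𝓤 := by
  simp only [IsCover, forall_mem_image, inter_erase, erase_inter]

lemma isCover_filter_of_insert {C : Finset α} {𝓤 : Finset (Finset α)} {x : α}
    (h : IsCover (insert x C) 𝓤) : IsCover C (𝓤.filter (x ∉ ·)) := by
  intro U hU
  obtain ⟨hU, hxU⟩ := mem_filter.1 hU
  obtain ⟨y, hy⟩ := h U hU
  rw [insert_inter_of_notMem hxU] at hy
  exact ⟨y, hy⟩

lemma isCover_insert_of_filter {C : Finset α} {𝓤 : Finset (Finset α)} {x : α}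
    (h : IsCover C (𝓤.filter (x ∉ ·))) : IsCover (insert x C) 𝓤 := by
  intro U hU
  by_cases hxU : x ∈ U
  · exact ⟨x, mem_inter.2 ⟨mem_insert_self x C, hxU⟩⟩
  · exact (h U (mem_filter.2 ⟨hU, hxU⟩)).mono (inter_subset_inter (subset_insert x C) le_rfl)

lemma sum_card_image_erase_lt {𝓤 : Finset (Finset α)} {U₀ : Finset α} {x : α} (hU₀ : U₀ ∈ 𝓤)
    (hx : x ∈ U₀) : ∑ V ∈ 𝓤.image (·.erase x), V.card < ∑ U ∈ 𝓤, U.card :=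
  (sum_image_le_of_nonneg fun _ _ => Nat.zero_le _).trans_lt <|
    sum_lt_sum (fun _ _ => card_erase_le) ⟨U₀, hU₀, card_erase_lt_of_mem hx⟩

lemma sum_card_filter_notMem_lt {𝓤 : Finset (Finset α)} {U₀ : Finset α} {x : α} (hU₀ : U₀ ∈ 𝓤)
    (hx : x ∈ U₀) : ∑ U ∈ 𝓤.filter (x ∉ ·), U.card < ∑ U ∈ 𝓤, U.card :=
  sum_lt_sum_of_subset (filter_subset _ _) hU₀ (fun h => (mem_filter.1 h).2 hx)
    (card_pos.2 ⟨x, hx⟩) fun _ _ _ => Nat.zero_le _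

lemma card_sdiff_image_erase_le {𝓤 : Finset (Finset α)} {x : α} {r : ℕ}
    (hdev : ∀ U ∈ 𝓤, ∀ U' ∈ 𝓤, (U \ U').card ≤ r) :
    ∀ V ∈ 𝓤.image (·.erase x), ∀ V' ∈ 𝓤.image (·.erase x), (V \ V').card ≤ r := by
  simp only [forall_mem_image, ← erase_sdiff_distrib]
  exact fun U hU U' hU' => card_erase_le.trans (hdev U hU U' hU')

lemma card_add_one_le_card_sdiff_add_card {U₀ V : Finset α} {x : α} (hx : x ∈ U₀)
    (hxV : x ∉ V) : V.card + 1 ≤ (V \ U₀).card + U₀.card := by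
  have hVU₀ : V ∩ U₀ ⊆ U₀.erase x := fun y hy =>
    mem_erase.2 ⟨fun h => hxV (h ▸ (mem_inter.1 hy).1), (mem_inter.1 hy).2⟩
  have := card_le_card hVU₀
  rw [card_erase_of_mem hx] at this
  have := card_sdiff_add_card_inter V U₀
  have := card_pos.2 ⟨x, hx⟩
  omega

lemma card_sdiff_le_card_sdiff_add_card_sdiff (F F' K : Finset α) :
    (F \ F').card ≤ (F \ K).card + (K \ F').card :=
  (card_le_card (sdiff_triangle F K F')).trans (card_union_le _ _)

lemma mul_le_card_of_mul_sq_le {L c : ℝ} (hL : 0 < L) {r : ℕ} {Z U : Finset α} (hZU : Z ⊆ U)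
    (hsize : 2 * r + (U.card : ℝ) ≤ 2 * L + 1)
    (h : c * L ^ 2 ≤ L * Z.card + (U \ Z).card * (2 * r + (U \ Z).card - 1) / 2) :
    c * L ≤ U.card := by
  have hsplit : ((U \ Z).card : ℝ) + Z.card = U.card := by
    exact_mod_cast card_sdiff_add_card_eq_card hZU
  have hw : 2 * r + ((U \ Z).card : ℝ) ≤ 2 * L + 1 := by
    linarith [Nat.cast_nonneg (α := ℝ) Z.card]
  refine le_of_mul_le_mul_right ?_ hL
  nlinarith [Nat.cast_nonneg (α := ℝ) (U \ Z).card]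

lemma card_sdiff_le_of_card_inter_ge {F F' K : Finset α} {n k : ℕ}
    (hF : F.card = n) (hK : K.card = n - k) (hFK : n - 2 * k ≤ (F ∩ K).card)
    (hF'K : n - 2 * k ≤ (F' ∩ K).card) : (F \ F').card ≤ 3 * k := by
  have := card_sdiff_le_card_sdiff_add_card_sdiff F F' K
  have := card_sdiff_add_card_inter F K
  have := card_sdiff_add_card_inter K F'
  rw [inter_comm K F'] at this
  omega

variable [Fintype α]

lemma inf_image_erase {𝓤 : Finset (Finset α)} (h𝓤 : 𝓤.Nonempty) (x : α) :
    (𝓤.image (·.erase x)).inf id = (𝓤.inf id).erase x := by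
  ext a
  obtain ⟨U, hU⟩ := h𝓤
  simp only [mem_inf, forall_mem_image, id, mem_erase]
  exact ⟨fun h => ⟨(h hU).1, fun V hV => (h hV).2⟩, fun h V hV => ⟨h.1, h.2 V hV⟩⟩

lemma mem_minCovers {n : ℕ} {𝓤 : Finset (Finset α)} {C : Finset α} :
    C ∈ minCovers n 𝓤 ↔ C.card ≤ n ∧ IsCover C 𝓤 ∧ ∀ C' ⊆ C, IsCover C' 𝓤 → C' = C := by
  simp [minCovers]

lemma minCovers_image_erase (n : ℕ) (𝓤 : Finset (Finset α)) (x : α) :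
    minCovers n (𝓤.image (·.erase x)) = (minCovers n 𝓤).filter (x ∉ ·) := by
  ext C
  simp only [mem_filter, mem_minCovers, isCover_image_erase_iff]
  constructor
  · rintro ⟨hcard, hcov, hmin⟩
    have hxC : x ∉ C := by
      have := hmin (C.erase x) (erase_subset x C) (by rwa [erase_idem])
      intro hx
      rw [← this] at hx
      exact notMem_erase x C hx
    rw [erase_eq_of_notMem hxC] at hcov
    refine ⟨⟨hcard, hcov, fun C' hC' hcov' => hmin C' hC' ?_⟩, hxC⟩
    rwa [erase_eq_of_notMem fun hx => hxC (hC' hx)]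
  · rintro ⟨⟨hcard, hcov, hmin⟩, hxC⟩
    refine ⟨hcard, by rwa [erase_eq_of_notMem hxC], fun C' hC' hcov' => ?_⟩
    rw [← erase_eq_of_notMem fun hx => hxC (hC' hx), hmin _ ((erase_subset x C').trans hC') hcov']

lemma erase_mem_minCovers_filter {n : ℕ} {𝓤 : Finset (Finset α)} {C : Finset α} {x : α}
    (hC : C ∈ minCovers n 𝓤) (hxC : x ∈ C) : C.erase x ∈ minCovers n (𝓤.filter (x ∉ ·)) := by
  obtain ⟨hcard, hcov, hmin⟩ := mem_minCovers.1 hC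
  refine mem_minCovers.2 ⟨card_erase_le.trans hcard,
    isCover_filter_of_insert (by rwa [insert_erase hxC]), fun D hD hcovD => ?_⟩
  have hxD : x ∉ D := fun hx => notMem_erase x C (hD hx)
  have hDC : insert x D ⊆ C := insert_subset hxC (hD.trans (erase_subset x C))
  rw [← hmin _ hDC (isCover_insert_of_filter hcovD), erase_insert hxD]

end Covers

section Weight

variable [Fintype α] [DecidableEq α]

lemma covWeight_empty (n : ℕ) (L : ℝ) : covWeight n L (∅ : Finset (Finset α)) = 1 := by
  have : minCovers n (∅ : Finset (Finset α)) = {∅} := by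
    ext C
    simp only [mem_minCovers, mem_singleton]
    refine ⟨fun ⟨_, _, hmin⟩ => (hmin ∅ (empty_subset C) (by simp [IsCover])).symm, ?_⟩
    rintro rfl
    exact ⟨by simp, by simp [IsCover], fun C' hC' _ => subset_empty.1 hC'⟩
  simp [covWeight, this]

lemma covWeight_eq_zero_of_empty_mem (n : ℕ) (L : ℝ) {𝓤 : Finset (Finset α)} (h : ∅ ∈ 𝓤) :
    covWeight n L 𝓤 = 0 := by
  have : minCovers n 𝓤 = ∅ := by
    ext C
    simp only [mem_minCovers, notMem_empty, iff_false, not_and]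
    intro _ hcov
    simpa using hcov ∅ h
  simp [covWeight, this]

lemma sum_minCovers_filter_mem_le {L : ℝ} (hL : 0 < L) (n : ℕ) (𝓤 : Finset (Finset α)) (x : α) :
    ∑ C ∈ (minCovers n 𝓤).filter (x ∈ ·), L ^ (-(C.card : ℤ))
      ≤ L⁻¹ * covWeight n L (𝓤.filter (x ∉ ·)) := by
  set T := (minCovers n 𝓤).filter (x ∈ ·)
  have hxT : ∀ C ∈ T, x ∈ C := fun C hC => (mem_filter.1 hC).2
  have hinj : Set.InjOn (fun C : Finset α => C.erase x) T := fun C₁ h₁ C₂ h₂ he => by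
    rw [← insert_erase (hxT C₁ h₁), ← insert_erase (hxT C₂ h₂)]
    exact congrArg (insert x) he
  calc ∑ C ∈ T, L ^ (-(C.card : ℤ))
      = ∑ C ∈ T, L⁻¹ * L ^ (-((C.erase x).card : ℤ)) := by
        refine sum_congr rfl fun C hC => ?_
        rw [← card_erase_add_one (hxT C hC)]
        push_cast
        rw [neg_add, zpow_add₀ hL.ne', zpow_neg_one, mul_comm]
    _ = L⁻¹ * ∑ D ∈ T.image (·.erase x), L ^ (-(D.card : ℤ)) := by
        rw [sum_image hinj, mul_sum]
    _ ≤ L⁻¹ * covWeight n L (𝓤.filter (x ∉ ·)) := by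
        gcongr
        refine sum_le_sum_of_subset_of_nonneg ?_ fun D _ _ => zpow_nonneg hL.le _
        intro D hD
        obtain ⟨C, hC, rfl⟩ := mem_image.1 hD
        exact erase_mem_minCovers_filter (mem_filter.1 hC).1 (hxT C hC)

lemma covWeight_mul_sq_le_image_erase_add {L : ℝ} (hL : 0 < L) (n : ℕ)
    (𝓤 : Finset (Finset α)) (x : α) : covWeight n L 𝓤 * L ^ 2
      ≤ covWeight n L (𝓤.image (·.erase x)) * L ^ 2 + covWeight n L (𝓤.filter (x ∉ ·)) * L := by
  have hsplit : covWeight n L 𝓤 ≤ covWeight n L (𝓤.image (·.erase x))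
      + L⁻¹ * covWeight n L (𝓤.filter (x ∉ ·)) := by
    rw [covWeight, ← sum_filter_add_sum_filter_not _ (x ∉ ·), covWeight, minCovers_image_erase]
    simp only [not_not]
    gcongr
    exact sum_minCovers_filter_mem_le hL n 𝓤 x
  calc covWeight n L 𝓤 * L ^ 2
      ≤ (covWeight n L (𝓤.image (·.erase x)) + L⁻¹ * covWeight n L (𝓤.filter (x ∉ ·))) * L ^ 2 := by
        gcongr
    _ = _ := by field_simp

lemma covWeight_mul_sq_le_image_erase_add_of_mem_inf {L : ℝ} (hL : 0 < L) (n : ℕ)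
    {𝓤 : Finset (Finset α)} {x : α} (hx : x ∈ 𝓤.inf id) :
    covWeight n L 𝓤 * L ^ 2 ≤ covWeight n L (𝓤.image (·.erase x)) * L ^ 2 + L := by
  have h𝓥 : 𝓤.filter (x ∉ ·) = ∅ :=
    filter_eq_empty_iff.2 fun U hU => not_not.2 (mem_inf.1 hx U hU)
  simpa [h𝓥, covWeight_empty] using covWeight_mul_sq_le_image_erase_add hL n 𝓤 x

theorem covWeight_mul_sq_le {L : ℝ} (hL : 0 < L) (n r : ℕ) {𝓤 : Finset (Finset α)}
    {U₀ : Finset α} (hU₀ : U₀ ∈ 𝓤) (hsize : ∀ U ∈ 𝓤, 2 * r + (U.card : ℝ) ≤ 2 * L + 1)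
    (hdev : ∀ U ∈ 𝓤, ∀ U' ∈ 𝓤, (U \ U').card ≤ r) :
    covWeight n L 𝓤 * L ^ 2 ≤ L * (𝓤.inf id).card
      + (U₀ \ 𝓤.inf id).card * (2 * r + (U₀ \ 𝓤.inf id).card - 1) / 2 := by
  induction hS : ∑ U ∈ 𝓤, U.card using Nat.strong_induction_on generalizing 𝓤 U₀ with
  | _ S ih =>
  subst hS
  have ih_erase (x : α) (hx : x ∈ U₀) :=
    ih _ (sum_card_image_erase_lt hU₀ hx) (mem_image_of_mem (·.erase x) hU₀)
      (forall_mem_image.2 fun U hU =>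
        (hsize U hU).trans' (add_le_add_right (Nat.cast_le.2 card_erase_le) _))
      (card_sdiff_image_erase_le hdev) rfl
  obtain ⟨x, hx⟩ | hZ := (𝓤.inf id).eq_empty_or_nonempty.symm
  · have hIH := ih_erase x (mem_inf.1 hx U₀ hU₀)
    rw [inf_image_erase ⟨U₀, hU₀⟩, ← erase_sdiff_distrib,
      erase_eq_of_notMem fun h => (mem_sdiff.1 h).2 hx] at hIH
    have hcard : (((𝓤.inf id).erase x).card : ℝ) + 1 = (𝓤.inf id).card := by
      exact_mod_cast card_erase_add_one hx
    rw [← hcard]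
    linarith [covWeight_mul_sq_le_image_erase_add_of_mem_inf hL n hx]
  rw [hZ]
  simp only [card_empty, sdiff_empty, Nat.cast_zero, mul_zero, zero_add]
  obtain rfl | ⟨x, hx⟩ := U₀.eq_empty_or_nonempty
  · simp [covWeight_eq_zero_of_empty_mem n L hU₀]
  obtain ⟨Us, hUs, hxUs⟩ : ∃ U ∈ 𝓤, x ∉ U := by
    by_contra! h
    simpa [hZ] using (mem_inf (f := id)).2 h
  have hIH := ih_erase x hx
  rw [inf_image_erase ⟨U₀, hU₀⟩, hZ] at hIH
  simp only [erase_empty, sdiff_empty, card_empty, Nat.cast_zero, mul_zero, zero_add] at hIH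
  have hUs' : Us ∈ 𝓤.filter (x ∉ ·) := mem_filter.2 ⟨hUs, hxUs⟩
  have h𝓥 : covWeight n L (𝓤.filter (x ∉ ·)) * L ≤ Us.card :=
    mul_le_card_of_mul_sq_le hL (inf_le hUs') (hsize Us hUs) <|
      ih _ (sum_card_filter_notMem_lt hU₀ hx) hUs' (fun U hU => hsize U (mem_filter.1 hU).1)
        (fun U hU U' hU' => hdev U (mem_filter.1 hU).1 U' (mem_filter.1 hU').1) rfl
  have hUs_card : (Us.card : ℝ) + 1 ≤ r + U₀.card := by
    exact_mod_cast (card_add_one_le_card_sdiff_add_card hx hxUs).trans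
      (by gcongr; exact hdev Us hUs U₀ hU₀)
  have hcard : ((U₀.erase x).card : ℝ) + 1 = U₀.card := by
    exact_mod_cast card_erase_add_one hx
  rw [← hcard] at hUs_card ⊢
  nlinarith [covWeight_mul_sq_le_image_erase_add hL n 𝓤 x]

end Weight

theorem stmt5 [Fintype α] [DecidableEq α] (n k : ℕ) (hk : (k : ℝ) ≤ (n : ℝ) / 10)
    (𝓚 : Finset (Finset α)) (hunif : ∀ F ∈ 𝓚, F.card = n)
    (K : Finset α) (hK : K.card = n - k)
    (hint : ∀ F ∈ 𝓚, n - 2 * k ≤ (F ∩ K).card) :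
    covWeight n ((n : ℝ) - k) 𝓚 ≤ 1 ∨
      n - 2 * k ≤ (univ.filter (fun x => ∀ F ∈ 𝓚, x ∈ F)).card := by
  have hcore : univ.filter (fun x => ∀ F ∈ 𝓚, x ∈ F) = 𝓚.inf id := by
    ext; simp [mem_inf]
  rw [hcore, or_iff_not_imp_right, not_le]
  intro hs
  obtain rfl | ⟨F₀, hF₀⟩ := 𝓚.eq_empty_or_nonempty
  · exact (covWeight_empty n _).le
  have hsplit : ((F₀ \ 𝓚.inf id).card : ℝ) + (𝓚.inf id).card = n := by
    exact_mod_cast (card_sdiff_add_card_eq_card (inf_le hF₀)).trans (hunif F₀ hF₀)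
  have hs' : ((𝓚.inf id).card : ℝ) + 2 * k + 1 ≤ n := by
    exact_mod_cast (by omega : _ + 2 * k + 1 ≤ n)
  have hL : 0 < (n : ℝ) - k := by linarith
  have hbound := covWeight_mul_sq_le hL n (3 * k) hF₀
    (fun F hF => by rw [hunif F hF]; push_cast; linarith)
    (fun F hF F' hF' => card_sdiff_le_of_card_inter_ge (hunif F hF) hK (hint F hF) (hint F' hF'))
  -- with `u = n - s ∈ [2k + 1, n]` the slack `(n - k)(u - k) - u(6k + u - 1)/2` is concave in `u`
  -- and nonnegative at both ends
  have hramp : ((n : ℝ) - k) * (𝓚.inf id).card + (F₀ \ 𝓚.inf id).card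
      * (2 * (3 * k : ℕ) + (F₀ \ 𝓚.inf id).card - 1) / 2 ≤ ((n : ℝ) - k) ^ 2 := by
    push_cast
    nlinarith
  exact le_of_mul_le_mul_right (by linarith) (by positivity : (0 : ℝ) < ((n : ℝ) - k) ^ 2)
end

section
/- Let $n\ge 1$, $l,t\ge 1$, and let $\mathcal{F}\subseteq\mathcal{A}$ be a subfamily of an $n$-uniform family $\mathcal{A}$ with $\tau(\mathcal{A}\setminus\mathcal{F})\ge t+1$. Then there exists $A\in\mathcal{A}\setminus\mathcal{F}$ such that, setting $\mathcal{F}'=\mathcal{F}\cup\{A\}$, for every $i=1,\dots,l$: $d^i_{\mathcal{F}'}\le d^i_{\mathcal{F}}+\frac{l\log|\mathcal{A}|}{t}\,2^i\,d^{i-1}_{\mathcal{F}}+n$, where $d^i_{\mathcal{G}}=\sum_{x\in X}d_{\mathcal{G}}(x)^i$ and $d_{\mathcal{G}}(x)$ is the number of sets of $\mathcal{G}$ containing $x$. -/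
open Finset

variable {α : Type*}

/-- `d^i_𝓖 = ∑_{x ∈ X} d_𝓖(x)^i`, where `d_𝓖(x)` is the degree of `x` in `𝓖`. -/
noncomputable def degPow [Fintype α] [DecidableEq α] (𝓖 : Finset (Finset α)) (i : ℕ) : ℝ :=
  ∑ x, ((𝓖.filter (fun F => x ∈ F)).card : ℝ) ^ i

/-! Weight every point by `w x = ∑_{j < l} d_𝓕(x)^j / d^j_𝓕`, so that the total weight is at most
`l` while `∑_{x ∈ A} d_𝓕(x)^j ≤ w(A) d^j_𝓕` for each `j < l`. If every `A ∈ 𝓐 \ 𝓕` carried more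
than a `log |𝓐 \ 𝓕| / t` share of the total weight, then `t` points drawn independently according
to `w` would miss each such `A` with probability less than `e^{-log |𝓐 \ 𝓕|}`, so on average they
would miss fewer than one set: some `t` points would cover `𝓐 \ 𝓕`, contradicting
`τ(𝓐 \ 𝓕) > t`. Adding a light set `A` raises `d_𝓕(x)^i`, for `x ∈ A`, by at most
`(d_𝓕(x) + 1)^i - d_𝓕(x)^i ≤ 2^i d_𝓕(x)^{i-1} + 1`. -/

lemma one_sub_pow_lt_exp_neg_mul {a b : ℝ} (ha : a ≤ 1) (hba : b < a) {t : ℕ} (ht : 0 < t) :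
    (1 - a) ^ t < Real.exp (-(t * b)) :=
  calc (1 - a) ^ t ≤ Real.exp (-a) ^ t :=
        pow_le_pow_left₀ (by linarith) (Real.one_sub_le_exp_neg a) t
    _ = Real.exp (-(t * a)) := by rw [← Real.exp_nat_mul, mul_neg]
    _ < Real.exp (-(t * b)) := by gcongr

section Covers

variable [DecidableEq α]

lemma covNum_le_card {C : Finset α} {𝓖 : Finset (Finset α)} (h : IsCover C 𝓖) :
    covNum 𝓖 ≤ C.card :=
  Nat.sInf_le ⟨C, rfl, h⟩

variable [Fintype α]

lemma exists_isCover_card_le_of_sum_one_sub_pow_lt_one (𝓖 : Finset (Finset α)) (p : α → ℝ)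
    (hp : ∀ x, 0 ≤ p x) (hp_sum : ∑ x, p x = 1) (t : ℕ)
    (h : ∑ A ∈ 𝓖, (1 - ∑ x ∈ A, p x) ^ t < 1) :
    ∃ C : Finset α, C.card ≤ t ∧ IsCover C 𝓖 := by
  set μ : (Fin t → α) → ℝ := fun f => ∏ i, p (f i)
  set missed : (Fin t → α) → Finset (Finset α) := fun f => 𝓖.filter (fun A => ∀ i, f i ∈ Aᶜ)
  have hμ_sum : ∑ f, μ f = 1 := by simp only [μ, ← Fintype.sum_pow, hp_sum, one_pow]
  have hmiss (A : Finset α) :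
      ∑ f, μ f * (if ∀ i, f i ∈ Aᶜ then 1 else 0) = (1 - ∑ x ∈ A, p x) ^ t := by
    have : 1 - ∑ x ∈ A, p x = ∑ x, p x * if x ∈ Aᶜ then 1 else 0 := by
      simp only [mul_boole, sum_ite_mem, univ_inter]
      rw [← hp_sum, ← sum_compl_add_sum A, add_sub_cancel_right]
    simp only [this, Fintype.sum_pow, prod_mul_distrib, Fintype.prod_boole, μ]
    congr!
  have hexp : ∑ f, μ f * (missed f).card < ∑ f, μ f := by
    calc ∑ f, μ f * (missed f).card
        = ∑ A ∈ 𝓖, ∑ f, μ f * (if ∀ i, f i ∈ Aᶜ then 1 else 0) := by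
          simp only [missed, card_filter, Nat.cast_sum, Nat.cast_ite, Nat.cast_one, Nat.cast_zero,
            mul_sum]
          exact sum_comm
      _ < ∑ f, μ f := by simpa only [hmiss, hμ_sum] using h
  obtain ⟨f, -, hf⟩ := exists_lt_of_sum_lt hexp
  have hf_missed : missed f = ∅ := by
    rw [← card_eq_zero]
    by_contra hne
    have : (1 : ℝ) ≤ (missed f).card := by exact_mod_cast Nat.one_le_iff_ne_zero.2 hne
    nlinarith [prod_nonneg fun i (_ : i ∈ univ) => hp (f i)]
  refine ⟨univ.image f, card_image_le.trans (card_fin t).le, fun A hA => ?_⟩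
  have hA_hit : A ∉ missed f := hf_missed ▸ notMem_empty A
  simp only [missed, mem_filter, mem_compl, not_and, not_forall, not_not] at hA_hit
  obtain ⟨i, hi⟩ := hA_hit hA
  exact ⟨f i, mem_inter.2 ⟨mem_image_of_mem f (mem_univ i), hi⟩⟩

lemma exists_sum_le_log_card_div_mul_sum_of_lt_covNum (𝓖 : Finset (Finset α)) (w : α → ℝ)
    (hw : ∀ x, 0 ≤ w x) {t : ℕ} (ht : 0 < t) (htau : t < covNum 𝓖) :
    ∃ A ∈ 𝓖, ∑ x ∈ A, w x ≤ Real.log 𝓖.card / t * ∑ x, w x := by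
  by_contra! hheavy
  set W := ∑ x, w x
  set θ := Real.log 𝓖.card / t with hθ_def
  obtain ⟨A₀, hA₀⟩ : 𝓖.Nonempty := by
    rw [nonempty_iff_ne_empty]
    rintro rfl
    have := covNum_le_card (C := (∅ : Finset α)) (𝓖 := ∅) fun A hA => absurd hA (notMem_empty A)
    rw [card_empty] at this
    omega
  have hθ : 0 ≤ θ := by positivity
  have hW : 0 < W := by
    have h₀ := hheavy A₀ hA₀
    have : ∑ x ∈ A₀, w x ≤ W := sum_le_univ_sum_of_nonneg hw
    linarith [mul_nonneg hθ (sum_nonneg fun x (_ : x ∈ univ) => hw x)]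
  set p : α → ℝ := fun x => w x / W
  have hp_sum : ∑ x, p x = 1 := by rw [← sum_div, div_self hW.ne']
  have hG : (0 : ℝ) < 𝓖.card := by exact_mod_cast card_pos.2 ⟨A₀, hA₀⟩
  have hmiss (A : Finset α) (hA : A ∈ 𝓖) : (1 - ∑ x ∈ A, p x) ^ t < (𝓖.card : ℝ)⁻¹ := by
    have hpA : θ < ∑ x ∈ A, p x := by
      rw [← sum_div, lt_div_iff₀ hW]
      exact hheavy A hA
    have hpA_le : ∑ x ∈ A, p x ≤ 1 :=
      hp_sum ▸ sum_le_univ_sum_of_nonneg fun x => div_nonneg (hw x) hW.le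
    calc (1 - ∑ x ∈ A, p x) ^ t < Real.exp (-(t * θ)) := one_sub_pow_lt_exp_neg_mul hpA_le hpA ht
      _ = (𝓖.card : ℝ)⁻¹ := by
        rw [hθ_def, mul_div_cancel₀ _ (by positivity), Real.exp_neg, Real.exp_log hG]
  obtain ⟨C, hC, hcover⟩ := exists_isCover_card_le_of_sum_one_sub_pow_lt_one 𝓖 p
    (fun x => div_nonneg (hw x) hW.le) hp_sum t <| calc
      ∑ A ∈ 𝓖, (1 - ∑ x ∈ A, p x) ^ t < ∑ A ∈ 𝓖, (𝓖.card : ℝ)⁻¹ :=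
        sum_lt_sum_of_nonempty ⟨A₀, hA₀⟩ hmiss
      _ = 1 := by rw [sum_const, nsmul_eq_mul, mul_inv_cancel₀ hG.ne']
  have := covNum_le_card hcover
  omega

end Covers

lemma add_one_pow_le_pow_add_two_pow_mul_add_one (d : ℕ) {i : ℕ} (hi : 1 ≤ i) :
    (d + 1) ^ i ≤ d ^ i + 2 ^ i * d ^ (i - 1) + 1 := by
  rcases Nat.eq_zero_or_pos d with rfl | hd
  · simp
  calc (d + 1) ^ i = ∑ k ∈ range i, d ^ k * i.choose k + d ^ i := by
        simp [add_pow, sum_range_succ]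
    _ ≤ ∑ k ∈ range i, d ^ (i - 1) * i.choose k + d ^ i := by
        gcongr with k hk
        have := mem_range.1 hk
        omega
    _ ≤ d ^ (i - 1) * 2 ^ i + d ^ i := by
        rw [← mul_sum, ← Nat.sum_range_choose i]
        gcongr
        omega
    _ ≤ d ^ i + 2 ^ i * d ^ (i - 1) + 1 := by rw [Nat.mul_comm]; omega

section NormalizedSum

variable {ι : Type*} [Fintype α]

noncomputable def normalizedSum (s : Finset ι) (f : ι → α → ℝ) (x : α) : ℝ :=
  ∑ j ∈ s, f j x / ∑ y, f j y

variable {s : Finset ι} {f : ι → α → ℝ}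

lemma normalizedSum_nonneg (hf : ∀ j x, 0 ≤ f j x) (x : α) : 0 ≤ normalizedSum s f x :=
  sum_nonneg fun j _ => div_nonneg (hf j x) (sum_nonneg fun y _ => hf j y)

lemma sum_normalizedSum_le_card (s : Finset ι) (f : ι → α → ℝ) :
    ∑ x, normalizedSum s f x ≤ s.card :=
  calc ∑ x, normalizedSum s f x = ∑ j ∈ s, (∑ x, f j x) / ∑ y, f j y := by
        simp only [normalizedSum, sum_div]
        exact sum_comm
    _ ≤ ∑ _j ∈ s, 1 := sum_le_sum fun j _ => div_self_le_one _
    _ = s.card := by rw [sum_const, nsmul_one]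

lemma sum_le_sum_normalizedSum_mul (hf : ∀ j x, 0 ≤ f j x) {j : ι} (hj : j ∈ s)
    (A : Finset α) : ∑ x ∈ A, f j x ≤ (∑ x ∈ A, normalizedSum s f x) * ∑ y, f j y := by
  have hfF (x : α) : ∑ y, f j y = 0 → f j x = 0 := fun h =>
    le_antisymm (h ▸ single_le_sum (fun y _ => hf j y) (mem_univ x)) (hf j x)
  calc ∑ x ∈ A, f j x = (∑ x ∈ A, f j x / ∑ y, f j y) * ∑ y, f j y := by
        rw [sum_mul]
        exact sum_congr rfl fun x _ => (div_mul_cancel_of_imp (hfF x)).symm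
    _ ≤ (∑ x ∈ A, normalizedSum s f x) * ∑ y, f j y := by
        gcongr with x
        · exact sum_nonneg fun y _ => hf j y
        · exact single_le_sum (f := fun j => f j x / ∑ y, f j y)
            (fun j _ => div_nonneg (hf j x) (sum_nonneg fun y _ => hf j y)) hj

end NormalizedSum

section Degree

variable [DecidableEq α]

def degree (𝓖 : Finset (Finset α)) (x : α) : ℕ :=
  (𝓖.filter (fun F => x ∈ F)).card

lemma degree_insert {A : Finset α} {𝓕 : Finset (Finset α)} (hA : A ∉ 𝓕) (x : α) :
    degree (insert A 𝓕) x = degree 𝓕 x + if x ∈ A then 1 else 0 := by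
  unfold degree
  rw [filter_insert]
  split_ifs
  · exact card_insert_of_notMem fun h => hA (mem_filter.1 h).1
  · rfl

lemma degPow_insert_le [Fintype α] {A : Finset α} {𝓕 : Finset (Finset α)} (hA : A ∉ 𝓕)
    {i : ℕ} (hi : 1 ≤ i) :
    degPow (insert A 𝓕) i ≤
      degPow 𝓕 i + 2 ^ i * ∑ x ∈ A, (degree 𝓕 x : ℝ) ^ (i - 1) + A.card := by
  have hpt (x : α) : (degree (insert A 𝓕) x : ℝ) ^ i ≤ (degree 𝓕 x : ℝ) ^ i +
      if x ∈ A then 2 ^ i * (degree 𝓕 x : ℝ) ^ (i - 1) + 1 else 0 := by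
    rw [degree_insert hA]
    split_ifs
    · exact_mod_cast (add_one_pow_le_pow_add_two_pow_mul_add_one (degree 𝓕 x) hi).trans_eq
        (by ring)
    · simp
  calc degPow (insert A 𝓕) i ≤ ∑ x, ((degree 𝓕 x : ℝ) ^ i +
        if x ∈ A then 2 ^ i * (degree 𝓕 x : ℝ) ^ (i - 1) + 1 else 0) :=
        sum_le_sum fun x _ => hpt x
    _ = degPow 𝓕 i + 2 ^ i * ∑ x ∈ A, (degree 𝓕 x : ℝ) ^ (i - 1) + A.card := by
        rw [sum_add_distrib, sum_ite_mem, univ_inter, sum_add_distrib, ← mul_sum, sum_const,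
          nsmul_one, add_assoc]
        rfl

end Degree

theorem stmt11_general [Fintype α] [DecidableEq α] (n l t : ℕ) (ht : 1 ≤ t)
    (𝓐 𝓕 : Finset (Finset α)) (hunif : ∀ A ∈ 𝓐, A.card = n)
    (htau : t + 1 ≤ covNum (𝓐 \ 𝓕)) :
    ∃ A ∈ 𝓐 \ 𝓕, ∀ i, 1 ≤ i → i ≤ l →
      degPow (insert A 𝓕) i ≤ degPow 𝓕 i +
        ((l : ℝ) * Real.log (𝓐.card) / t) * 2 ^ i * degPow 𝓕 (i - 1) + n := by
  set f : ℕ → α → ℝ := fun j x => (degree 𝓕 x : ℝ) ^ j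
  have hf (j : ℕ) (x : α) : 0 ≤ f j x := by positivity
  obtain ⟨A, hA, hA_light⟩ := exists_sum_le_log_card_div_mul_sum_of_lt_covNum (𝓐 \ 𝓕)
    (normalizedSum (range l) f) (normalizedSum_nonneg hf) ht htau
  obtain ⟨hA𝓐, hA𝓕⟩ := mem_sdiff.1 hA
  refine ⟨A, hA, fun i hi hil => ?_⟩
  have hlog : Real.log (𝓐 \ 𝓕).card / t * ∑ x, normalizedSum (range l) f x ≤
      l * Real.log 𝓐.card / t :=
    have hcard : Real.log (𝓐 \ 𝓕).card ≤ Real.log 𝓐.card := Real.log_le_log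
      (by exact_mod_cast card_pos.2 ⟨A, hA⟩) (by exact_mod_cast card_le_card sdiff_subset)
    have hsum : ∑ x, normalizedSum (range l) f x ≤ l := by
      simpa using sum_normalizedSum_le_card (range l) f
    calc _ ≤ Real.log 𝓐.card / t * l := by
          gcongr
          exact sum_nonneg fun x _ => normalizedSum_nonneg hf x
      _ = l * Real.log 𝓐.card / t := by ring
  have hA_deg : ∑ x ∈ A, (degree 𝓕 x : ℝ) ^ (i - 1) ≤
      l * Real.log 𝓐.card / t * degPow 𝓕 (i - 1) :=
    calc _ ≤ (∑ x ∈ A, normalizedSum (range l) f x) * degPow 𝓕 (i - 1) :=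
          sum_le_sum_normalizedSum_mul hf (mem_range.2 (by omega)) A
      _ ≤ _ := by
          gcongr
          · exact sum_nonneg fun x _ => hf (i - 1) x
          · exact hA_light.trans hlog
  calc degPow (insert A 𝓕) i
      ≤ degPow 𝓕 i + 2 ^ i * ∑ x ∈ A, (degree 𝓕 x : ℝ) ^ (i - 1) + A.card :=
        degPow_insert_le hA𝓕 hi
    _ ≤ degPow 𝓕 i + 2 ^ i * (l * Real.log 𝓐.card / t * degPow 𝓕 (i - 1)) + n := by
        rw [hunif A hA𝓐]
        gcongr
    _ = _ := by ring

theorem stmt11 [Fintype α] [DecidableEq α] (n l t : ℕ) (hn : 1 ≤ n) (hl : 1 ≤ l) (ht : 1 ≤ t)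
    (𝓐 𝓕 : Finset (Finset α)) (hsub : 𝓕 ⊆ 𝓐) (hunif : ∀ A ∈ 𝓐, A.card = n)
    (htau : t + 1 ≤ covNum (𝓐 \ 𝓕)) :
    ∃ A ∈ 𝓐 \ 𝓕, ∀ i, 1 ≤ i → i ≤ l →
      degPow (insert A 𝓕) i ≤ degPow 𝓕 i +
        ((l : ℝ) * Real.log (𝓐.card) / t) * 2 ^ i * degPow 𝓕 (i - 1) + n :=
  stmt11_general n l t ht 𝓐 𝓕 hunif htau
end
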